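/- arXiv:2511.02076 — 2 statements merged into one kernel-verified Lean document; each statement's English description precedes it below -/
import Mathlib

section
/- Two polynomials p₁, p₂ in M complex variables are mutually disjoint (there exists a unitary change of variables U such that p₁∘U depends only on the first M−n variables and p₂∘U depends only on the last n variables, for some n) if and only if their essential variables spaces are orthogonal: E(p₁) ⊥ E(p₂). -/
open MvPolynomial

/-- Gradient of a multivariate polynomial: vector of formal partial derivatives evaluated at `z`. -/
noncomputable def grad {M : ℕ} (p : MvPolynomial (Fin M) ℂ) (z : Fin M → ℂ) : Fin M → ℂ :=
  fun j => eval z (pderiv j p)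

/-- Space of essential variables: span of all pointwise evaluations of the gradient. -/
noncomputable def essSpace {M : ℕ} (p : MvPolynomial (Fin M) ℂ) : Submodule ℂ (Fin M → ℂ) :=
  Submodule.span ℂ (Set.range (grad p))

/-- Composition of a polynomial with a linear change of variables: `(compLin U p)(z) = p (U z)`. -/
noncomputable def compLin {M : ℕ} (U : Matrix (Fin M) (Fin M) ℂ) (p : MvPolynomial (Fin M) ℂ) :
    MvPolynomial (Fin M) ℂ :=
  aeval (fun i => ∑ j, C (U i j) * X j) p

/-- Standard Hermitian inner product on `ℂ^M`. -/
noncomputable def herm {M : ℕ} (v w : Fin M → ℂ) : ℂ := ∑ j, (starRingEnd ℂ) (v j) * w j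

/-!
By the chain rule, `∇(p ∘ U)(z) = ∇p(Uz) ᵥ* U`, so for invertible `U` the variable `j` is
inessential for `p ∘ U` exactly when `E(p)` is orthogonal to `b j`, the conjugate of the `j`-th
column of `U`. For unitary `U` the `b j` form an orthonormal basis; disjointness puts `E(p₁)` and
`E(p₂)` in the spans of complementary sets of basis vectors, hence they are orthogonal.
Conversely, if `E(p₁) ⊥ E(p₂)`, an orthonormal basis that lists a basis of `E(p₂)ᗮ ⊇ E(p₁)` before
one of `E(p₂)ᗮᗮ ⊇ E(p₂)` gives the required unitary `U`.
-/

open Matrix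
open scoped InnerProductSpace

theorem MvPolynomial.pderiv_aeval {R σ τ : Type*} [CommSemiring R] [Fintype σ]
    (f : σ → MvPolynomial τ R) (j : τ) (p : MvPolynomial σ R) :
    pderiv j (aeval f p) = ∑ i, aeval f (pderiv i p) * pderiv j (f i) := by
  classical
  induction p using MvPolynomial.induction_on with
  | C a => simp
  | add p q hp hq => simp only [map_add, hp, hq, add_mul, Finset.sum_add_distrib]
  | mul_X p k hp =>
    simp only [map_mul, aeval_X, pderiv_mul, hp, map_add, add_mul, Finset.sum_add_distrib,
      pderiv_X, Pi.single_apply, mul_ite, mul_one, mul_zero, apply_ite (aeval f), map_zero,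
      ite_mul, zero_mul, Finset.sum_ite_eq, Finset.mem_univ, if_true, Finset.sum_mul]
    congr 1
    exact Finset.sum_congr rfl fun i _ => by ring

theorem MvPolynomial.eval_aeval {R σ τ : Type*} [CommSemiring R]
    (f : σ → MvPolynomial τ R) (z : τ → R) (p : MvPolynomial σ R) :
    eval z (aeval f p) = eval (fun i => eval z (f i)) p := by
  simpa [coe_aeval_eq_eval] using aeval_bind₁ z f p

theorem grad_compLin {M : ℕ} (U : Matrix (Fin M) (Fin M) ℂ) (p : MvPolynomial (Fin M) ℂ)
    (z : Fin M → ℂ) : grad (compLin U p) z = grad p (U *ᵥ z) ᵥ* U := by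
  ext j
  simp only [grad, compLin, pderiv_aeval, map_sum, eval_aeval, pderiv_C_mul, pderiv_X,
    Pi.single_apply, mul_ite, mul_one, mul_zero, Finset.sum_ite_eq', Finset.mem_univ, if_true,
    eval_mul, eval_C, eval_X, vecMul, dotProduct]
  rfl

theorem pderiv_eq_zero_iff_forall_grad {M : ℕ} (p : MvPolynomial (Fin M) ℂ) (j : Fin M) :
    pderiv j p = 0 ↔ ∀ z, grad p z j = 0 :=
  ⟨fun h z => by simp [grad, h], fun h => MvPolynomial.funext fun z => by simpa [grad] using h z⟩

theorem pderiv_compLin_eq_zero_iff {M : ℕ} {U : Matrix (Fin M) (Fin M) ℂ}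
    (hU : Function.Surjective U.mulVec) (p : MvPolynomial (Fin M) ℂ) (j : Fin M) :
    pderiv j (compLin U p) = 0 ↔ ∀ v ∈ essSpace p, (v ᵥ* U) j = 0 := by
  let φ : (Fin M → ℂ) →ₗ[ℂ] ℂ := (LinearMap.proj j).comp U.vecMulLinear
  calc pderiv j (compLin U p) = 0 ↔ ∀ z, (grad p (U *ᵥ z) ᵥ* U) j = 0 := by
        simp only [pderiv_eq_zero_iff_forall_grad, grad_compLin]
    _ ↔ ∀ w, (grad p w ᵥ* U) j = 0 := (hU.forall (p := fun w => (grad p w ᵥ* U) j = 0)).symm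
    _ ↔ essSpace p ≤ LinearMap.ker φ := by
        rw [essSpace, Submodule.span_le, Set.range_subset_iff]; rfl
    _ ↔ ∀ v ∈ essSpace p, (v ᵥ* U) j = 0 := Iff.rfl

theorem Matrix.mulVec_surjective_of_mem_unitaryGroup {n α : Type*} [Fintype n] [DecidableEq n]
    [CommRing α] [StarRing α] {U : Matrix n n α} (hU : U ∈ Matrix.unitaryGroup n α) :
    Function.Surjective U.mulVec :=
  fun w => ⟨star U *ᵥ w, by rw [mulVec_mulVec, mem_unitaryGroup_iff.mp hU, one_mulVec]⟩

theorem herm_vecMul_vecMul {M : ℕ} {U : Matrix (Fin M) (Fin M) ℂ}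
    (hU : U ∈ Matrix.unitaryGroup (Fin M) ℂ) (v w : Fin M → ℂ) :
    herm (v ᵥ* U) (w ᵥ* U) = herm v w := by
  have herm_eq_dotProduct (x y : Fin M → ℂ) : herm x y = star x ⬝ᵥ y := rfl
  rw [herm_eq_dotProduct, herm_eq_dotProduct, star_vecMul, dotProduct_comm, ← dotProduct_mulVec,
    mulVec_mulVec, ← star_eq_conjTranspose, mem_unitaryGroup_iff.mp hU, one_mulVec,
    dotProduct_comm]

theorem herm_eq_inner {M : ℕ} (v w : Fin M → ℂ) :
    herm v w = ⟪WithLp.toLp 2 v, WithLp.toLp 2 w⟫_ℂ := by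
  simp [herm, PiLp.inner_apply, mul_comm]

theorem Submodule.exists_orthonormalBasis_fin_mem {𝕜 E : Type*} [RCLike 𝕜]
    [NormedAddCommGroup E] [InnerProductSpace 𝕜 E] [FiniteDimensional 𝕜 E] {m : ℕ}
    (hm : Module.finrank 𝕜 E = m) (K : Submodule 𝕜 E) :
    ∃ b : OrthonormalBasis (Fin m) 𝕜 E, ∀ j : Fin m,
      ((j : ℕ) < Module.finrank 𝕜 K → b j ∈ K) ∧ (Module.finrank 𝕜 K ≤ j → b j ∈ Kᗮ) := by
  have hdim : Module.finrank 𝕜 K + Module.finrank 𝕜 Kᗮ = m :=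
    hm ▸ K.finrank_add_finrank_orthogonal
  let b₀ := ((stdOrthonormalBasis 𝕜 K).prod (stdOrthonormalBasis 𝕜 Kᗮ)).map
    K.orthogonalDecomposition.symm
  let e := finSumFinEquiv.trans (finCongr hdim)
  refine ⟨b₀.reindex e, fun j => ⟨fun hj => ?_, fun hj => ?_⟩⟩
  · rw [show j = e (.inl ⟨j, hj⟩) by ext; simp [e]]
    simp [b₀]
  · rw [show j = e (.inr ⟨j - Module.finrank 𝕜 K, by omega⟩) by ext; simp [e]; omega]
    simp [b₀]

theorem OrthonormalBasis.exists_unitary_vecMul_eq_inner {𝕜 ι : Type*} [RCLike 𝕜] [Fintype ι]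
    [DecidableEq ι] (b : OrthonormalBasis ι 𝕜 (EuclideanSpace 𝕜 ι)) :
    ∃ U ∈ Matrix.unitaryGroup ι 𝕜, ∀ v j, (v ᵥ* U) j = ⟪b j, WithLp.toLp 2 v⟫_𝕜 := by
  let e := EuclideanSpace.basisFun ι 𝕜
  refine ⟨(e.toBasis.toMatrix b).map star, map_star_mem_unitaryGroup_iff.mpr
    (e.toMatrix_orthonormalBasis_mem_unitary b), fun v j => ?_⟩
  simp [e, vecMul, dotProduct, PiLp.inner_apply, Module.Basis.toMatrix_apply]

/-- Two polynomials are mutually disjoint (some unitary change of variables makes them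
depend on complementary sets of coordinates) iff their essential spaces are orthogonal. -/
theorem disjoint_iff_essSpace_orthogonal {M : ℕ} (p₁ p₂ : MvPolynomial (Fin M) ℂ) :
    (∃ n : ℕ, ∃ U ∈ Matrix.unitaryGroup (Fin M) ℂ,
      (∀ j : Fin M, M - n ≤ (j : ℕ) → pderiv j (compLin U p₁) = 0) ∧
      (∀ j : Fin M, (j : ℕ) < M - n → pderiv j (compLin U p₂) = 0)) ↔
    (∀ v ∈ essSpace p₁, ∀ w ∈ essSpace p₂, herm v w = 0) := by
  constructor
  · rintro ⟨n, U, hU, h₁, h₂⟩ v hv w hw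
    have hsurj := mulVec_surjective_of_mem_unitaryGroup hU
    rw [← herm_vecMul_vecMul hU]
    refine Finset.sum_eq_zero fun j _ => ?_
    rcases le_or_gt (M - n) j with hj | hj
    · rw [(pderiv_compLin_eq_zero_iff hsurj p₁ j).1 (h₁ j hj) v hv, map_zero, zero_mul]
    · rw [(pderiv_compLin_eq_zero_iff hsurj p₂ j).1 (h₂ j hj) w hw, mul_zero]
  · intro horth
    let E₂ : Submodule ℂ (EuclideanSpace ℂ (Fin M)) :=
      (essSpace p₂).comap (WithLp.linearEquiv 2 ℂ (Fin M → ℂ)).toLinearMap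
    obtain ⟨b, hb⟩ := E₂ᗮ.exists_orthonormalBasis_fin_mem finrank_euclideanSpace_fin
    obtain ⟨U, hU, hUb⟩ := b.exists_unitary_vecMul_eq_inner
    have hsurj := mulVec_surjective_of_mem_unitaryGroup hU
    have hrank : Module.finrank ℂ E₂ᗮ ≤ M :=
      (Submodule.finrank_le _).trans_eq finrank_euclideanSpace_fin
    refine ⟨M - Module.finrank ℂ E₂ᗮ, U, hU, fun j hj => ?_, fun j hj => ?_⟩
    · refine (pderiv_compLin_eq_zero_iff hsurj p₁ j).2 fun v hv => ?_
      have hv' : WithLp.toLp 2 v ∈ E₂ᗮ := (E₂.mem_orthogonal' _).2 fun w hw => by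
        rw [← herm_eq_inner]; exact horth v hv _ hw
      rw [hUb]
      exact Submodule.inner_left_of_mem_orthogonal hv' ((hb j).2 (by omega))
    · refine (pderiv_compLin_eq_zero_iff hsurj p₂ j).2 fun w hw => ?_
      rw [hUb]
      exact Submodule.inner_left_of_mem_orthogonal (K := E₂) hw ((hb j).1 (by omega))
end

section
/- For N ≥ 3, the set of N linear forms {z₁ − κ_j z₂ : j = 0,…,N−1} with κ_j = exp(iπ(2j+1)/N) cannot be partitioned into two nonempty sets A and B such that every form in A is orthogonal to every form in B, where forms ℓ = z₁ − κ z₂ and ℓ' = z₁ − κ' z₂ are orthogonal iff conj(κ)·κ' = −1. For N = 2 such a partition exists. -/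
open MvPolynomial

/-- The j-th root of -1 of order N. -/
noncomputable def kappa (N j : ℕ) : ℂ := Complex.exp (Real.pi * Complex.I * (2 * j + 1) / N)

/-! The roots `κ_j` are distinct and nonzero. If `conj κ_j * κ_k = -1` whenever `j ∈ A`, `k ∉ A`,
then fixing `k` forces all `κ_j` with `j ∈ A` to coincide, and fixing `j` does the same for `Aᶜ`;
so both parts are singletons and `N ≤ 2`. For `N = 2`, `κ_0 = i` and `κ_1 = -i`. -/

section ConstantProduct

variable {ι R : Type*} [CommMonoidWithZero R] [IsCancelMulZero R] {u v : ι → R} {c : R}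

theorem Finset.card_le_one_of_forall_mul_eq (hu : Function.Injective u) {b : R} (hb : b ≠ 0)
    {s : Finset ι} (h : ∀ j ∈ s, u j * b = c) : s.card ≤ 1 :=
  Finset.card_le_one.2 fun _ hi _ hj => hu <| mul_right_cancel₀ hb <| (h _ hi).trans (h _ hj).symm

theorem Fintype.card_le_two_of_forall_mul_eq [Fintype ι] [DecidableEq ι]
    (hu : Function.Injective u) (hv : Function.Injective v) (hu₀ : ∀ i, u i ≠ 0)
    (hv₀ : ∀ i, v i ≠ 0) {A : Finset ι} (hA : A.Nonempty) (hAc : Aᶜ.Nonempty)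
    (h : ∀ j ∈ A, ∀ k ∈ Aᶜ, u j * v k = c) : Fintype.card ι ≤ 2 := by
  obtain ⟨j, hj⟩ := hA
  obtain ⟨k, hk⟩ := hAc
  have hA₁ : A.card ≤ 1 := Finset.card_le_one_of_forall_mul_eq hu (hv₀ k) fun i hi => h i hi k hk
  have hAc₁ : Aᶜ.card ≤ 1 :=
    Finset.card_le_one_of_forall_mul_eq hv (hu₀ j) fun i hi => (mul_comm _ _).trans (h j hj i hi)
  rw [← Finset.card_add_card_compl A]
  omega

end ConstantProduct

theorem kappa_ne_zero (N j : ℕ) : kappa N j ≠ 0 :=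
  Complex.exp_ne_zero _

open Complex in
theorem kappa_eq_mul_pow (N j : ℕ) :
    kappa N j = exp (Real.pi * I / N) * exp (2 * Real.pi * I / N) ^ j := by
  rw [kappa, ← exp_nat_mul, ← exp_add]
  ring_nf

theorem kappa_injective {N : ℕ} : Function.Injective fun j : Fin N => kappa N j := by
  intro j k h
  have hN : N ≠ 0 := j.pos.ne'
  simp only [kappa_eq_mul_pow] at h
  exact Fin.ext <| (Complex.isPrimitiveRoot_exp N hN).pow_inj j.isLt k.isLt
    (mul_left_cancel₀ (Complex.exp_ne_zero _) h)

open Complex in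
theorem kappa_two_zero : kappa 2 0 = I := by
  rw [kappa]
  convert exp_pi_div_two_mul_I using 2
  push_cast
  ring

open Complex in
theorem kappa_two_one : kappa 2 1 = -I := by
  have : Real.pi * I * (2 * ((1 : ℕ) : ℂ) + 1) / (2 : ℕ) = Real.pi / 2 * I + Real.pi * I := by
    push_cast
    ring
  rw [kappa, this, exp_add, exp_pi_div_two_mul_I, exp_pi_mul_I, mul_neg_one]

/-- For N ≥ 3 the N linear forms z₁ - κ_j z₂ cannot be split into two nonempty mutually
orthogonal groups (orthogonality: conj(κ)·κ' = -1), while for N = 2 such a split exists. -/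
theorem noon_orthogonal_partition :
    (∀ N : ℕ, 3 ≤ N → ¬ ∃ A : Finset (Fin N), A.Nonempty ∧ Aᶜ.Nonempty ∧
      ∀ j ∈ A, ∀ k ∈ Aᶜ, (starRingEnd ℂ) (kappa N (j : ℕ)) * kappa N (k : ℕ) = -1) ∧
    (∃ A : Finset (Fin 2), A.Nonempty ∧ Aᶜ.Nonempty ∧
      ∀ j ∈ A, ∀ k ∈ Aᶜ, (starRingEnd ℂ) (kappa 2 (j : ℕ)) * kappa 2 (k : ℕ) = -1) := by
  constructor
  · rintro N hN ⟨A, hA, hAc, h⟩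
    have := Fintype.card_le_two_of_forall_mul_eq (u := fun j : Fin N => starRingEnd ℂ (kappa N j))
      ((starRingEnd ℂ).injective.comp kappa_injective) kappa_injective
      (fun _ => (map_ne_zero _).2 (kappa_ne_zero _ _)) (fun _ => kappa_ne_zero _ _) hA hAc h
    rw [Fintype.card_fin] at this
    omega
  · refine ⟨{0}, Finset.singleton_nonempty 0, ⟨1, by decide⟩, ?_⟩
    simp only [Finset.mem_singleton, Finset.compl_singleton, Finset.mem_erase]
    rintro j rfl k ⟨hk, -⟩
    obtain rfl : k = 1 := by omega
    simp [kappa_two_zero, kappa_two_one]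
end
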